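/- In a finite concurrent reachability game, let v₀ ∈ [0,1]^Q be defined by v₀(⊤) = 1 and v₀(q) = 0 for q ≠ ⊤, and set v_{n+1} := Δ(v_n) for all n ∈ ℕ. Then the sequence (v_n) converges in the supremum norm, and its limit is m, the least fixed point of Δ on V = { v ∈ [0,1]^Q : v(⊤) = 1 }. -/

import Mathlib

open scoped BigOperators Classical

noncomputable section

/-- A probability distribution on a finite type. -/
def FDist (X : Type) [Fintype X] : Type :=
  { p : X → ℝ // (∀ x, 0 ≤ p x) ∧ ∑ x, p x = 1 }

namespace CRG

variable {A B Q D : Type} [Fintype A] [Fintype B] [Fintype Q] [Fintype D]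

/-- The support of a distribution. -/
def supp {X : Type} [Fintype X] (σ : FDist X) : Set X := { x | σ.1 x ≠ 0 }

/-- The Dirac distribution. -/
def dirac {X : Type} [Fintype X] [DecidableEq X] (x : X) : FDist X :=
  ⟨fun y => if y = x then 1 else 0, by
    constructor
    · intro y
      dsimp only
      split <;> norm_num
    · simp⟩

/-- Outcome of a pair of mixed strategies in the game in normal form with payoff `u`. -/
def out (u : A → B → ℝ) (σA : FDist A) (σB : FDist B) : ℝ :=
  ∑ a, ∑ b, σA.1 a * σB.1 b * u a b

/-- Outcome of a mixed strategy of Player A against a pure action of Player B. -/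
def outB (u : A → B → ℝ) (σA : FDist A) (b : B) : ℝ :=
  ∑ a, σA.1 a * u a b

/-- The value of a Player A mixed strategy in a game in normal form. -/
def valStratGF (u : A → B → ℝ) (σA : FDist A) : ℝ :=
  ⨅ σB : FDist B, out u σA σB

/-- The (von Neumann) value of a finite game in normal form. -/
def valGF (u : A → B → ℝ) : ℝ :=
  ⨆ σA : FDist A, valStratGF u σA

/-- The optimal Player A mixed strategies in a game in normal form. -/
def OptA (u : A → B → ℝ) : Set (FDist A) := { σA | valStratGF u σA = valGF u }

/-- The optimal actions of Player B against the Player A mixed strategy `σA`. -/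
def optActs (u : A → B → ℝ) (σA : FDist A) : Set B :=
  { b | outB u σA b = valStratGF u σA }

/-- μ_v : the lift of a valuation of the states to the Nature states. -/
def lift (dist : D → FDist Q) (v : Q → ℝ) (d : D) : ℝ := ∑ q, (dist d).1 q * v q

/-- The payoff function of the local interaction `F_q` valued by `μ_m`. -/
def locPay (δ : Q → A → B → D) (dist : D → FDist Q) (m : Q → ℝ) (q : Q) : A → B → ℝ :=
  fun a b => lift dist m (δ q a b)

/-- One-step transition probability between states. -/
def step (δ : Q → A → B → D) (dist : D → FDist Q) (σA : FDist A) (σB : FDist B)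
    (q q' : Q) : ℝ :=
  ∑ a, ∑ b, σA.1 a * σB.1 b * (dist (δ q a b)).1 q'

/-- The operator Δ on valuations of the states. -/
def Δop (δ : Q → A → B → D) (dist : D → FDist Q) (T : Q) (v : Q → ℝ) : Q → ℝ :=
  fun q => if q = T then 1 else valGF (fun a b => lift dist v (δ q a b))

/-- The target `T` is an absorbing (self-looping) sink. -/
def Absorbing (δ : Q → A → B → D) (dist : D → FDist Q) (T : Q) : Prop :=
  ∀ a b, (dist (δ T a b)).1 = fun q => if q = T then 1 else 0

/-- `m` is the least fixed point of Δ on `[0,1]^Q`. -/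
def IsLfpDelta (δ : Q → A → B → D) (dist : D → FDist Q) (T : Q) (m : Q → ℝ) : Prop :=
  (∀ q, m q ∈ Set.Icc (0:ℝ) 1) ∧ Δop δ dist T m = m ∧
    ∀ v : Q → ℝ, (∀ q, v q ∈ Set.Icc (0:ℝ) 1) → Δop δ dist T v = v → ∀ q, m q ≤ v q

/-- A strategy: a history of past states together with the current state gives a
mixed action.  (This encodes maps `Q⁺ → 𝒟(X)`.) -/
def Strat (Q X : Type) [Fintype X] : Type := List Q → Q → FDist X

/-- Residual strategy after the history `π` has been played. -/
def residual {X : Type} [Fintype X] (s : Strat Q X) (π : List Q) : Strat Q X :=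
  fun h q => s (π ++ h) q

/-- The (positional) strategy associated with a per-state choice of mixed actions. -/
def ofPos {X : Type} [Fintype X] (s : Q → FDist X) : Strat Q X := fun _ q => s q

/-- Probability of reaching the set `S` within `n` steps from current state `q`,
history `h` having been played. -/
def reachSetNAux (δ : Q → A → B → D) (dist : D → FDist Q) (S : Set Q) :
    ℕ → Strat Q A → Strat Q B → List Q → Q → ℝ
  | 0, _, _, _, q => if q ∈ S then 1 else 0
  | n + 1, sA, sB, h, q =>
      if q ∈ S then 1
      else ∑ q', step δ dist (sA h q) (sB h q) q q' *
        reachSetNAux δ dist S n sA sB (h ++ [q]) q'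

/-- Probability of reaching the set `S` within `n` steps from state `q`. -/
def reachSetN (δ : Q → A → B → D) (dist : D → FDist Q) (S : Set Q) (n : ℕ)
    (sA : Strat Q A) (sB : Strat Q B) (q : Q) : ℝ :=
  reachSetNAux δ dist S n sA sB [] q

/-- Probability of reaching the target `T` within `n` steps from state `q`. -/
def reachN (δ : Q → A → B → D) (dist : D → FDist Q) (T : Q) (n : ℕ)
    (sA : Strat Q A) (sB : Strat Q B) (q : Q) : ℝ :=
  reachSetN δ dist {T} n sA sB q

/-- Probability of eventually reaching the target `T` from state `q`. -/
def reach (δ : Q → A → B → D) (dist : D → FDist Q) (T : Q)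
    (sA : Strat Q A) (sB : Strat Q B) (q : Q) : ℝ :=
  ⨆ n : ℕ, reachN δ dist T n sA sB q

/-- The value of a Player A strategy from state `q`. -/
def valA (δ : Q → A → B → D) (dist : D → FDist Q) (T : Q) (sA : Strat Q A) (q : Q) : ℝ :=
  ⨅ sB : Strat Q B, reach δ dist T sA sB q

/-- The value of the game from state `q`. -/
def value (δ : Q → A → B → D) (dist : D → FDist Q) (T : Q) (q : Q) : ℝ :=
  ⨆ sA : Strat Q A, valA δ dist T sA q

/-- A state is maximizable when Player A has an optimal strategy from it. -/
def Maximizable (δ : Q → A → B → D) (dist : D → FDist Q) (T q : Q) : Prop :=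
  ∃ sA : Strat Q A, valA δ dist T sA q = value δ dist T q

/-- A positional Player A strategy locally dominates the valuation `v`. -/
def LocallyDominates (δ : Q → A → B → D) (dist : D → FDist Q)
    (sA : Q → FDist A) (v : Q → ℝ) : Prop :=
  ∀ q, v q ≤ valStratGF (fun a b => lift dist v (δ q a b)) (sA q)

/-- Transition function ι of the MDP induced by a positional Player A strategy. -/
def stepB [DecidableEq B] (δ : Q → A → B → D) (dist : D → FDist Q)
    (sA : Q → FDist A) (q : Q) (b : B) (q' : Q) : ℝ :=
  step δ dist (sA q) (dirac b) q q'

/-- An end component of the MDP induced by the positional Player A strategy `sA`. -/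
structure EndComp [DecidableEq B] (δ : Q → A → B → D) (dist : D → FDist Q)
    (sA : Q → FDist A) where
  states : Set Q
  acts : Q → Set B
  acts_nonempty : ∀ q ∈ states, (acts q).Nonempty
  closed : ∀ q ∈ states, ∀ b ∈ acts q, ∀ q', stepB δ dist sA q b q' ≠ 0 → q' ∈ states
  connected : ∀ q ∈ states, ∀ q' ∈ states,
    Relation.ReflTransGen
      (fun x y => x ∈ states ∧ ∃ b ∈ acts x, stepB δ dist sA x b y ≠ 0) q q'

/-- `S_D` : the Nature states having a non-zero probability to reach `S`. -/
def natS (dist : D → FDist Q) (S : Set Q) : Set D :=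
  { d | ∃ q ∈ S, (dist d).1 q ≠ 0 }

/-- Progressive optimal local strategies at `q` w.r.t. the set `Gd`. -/
def Prog (δ : Q → A → B → D) (dist : D → FDist Q) (m : Q → ℝ) (q : Q)
    (Gd : Set Q) : Set (FDist A) :=
  { σA | σA ∈ OptA (locPay δ dist m q) ∧
      ∀ b ∈ optActs (locPay δ dist m q) σA, ∃ a ∈ supp σA, δ q a b ∈ natS dist Gd }

/-- Risky optimal local strategies at `q` w.r.t. the set `Bd`. -/
def Risk (δ : Q → A → B → D) (dist : D → FDist Q) (m : Q → ℝ) (q : Q)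
    (Bd : Set Q) : Set (FDist A) :=
  { σA | σA ∈ OptA (locPay δ dist m q) ∧
      ∃ b ∈ optActs (locPay δ dist m q) σA, ∃ a ∈ supp σA, δ q a b ∈ natS dist Bd }

/-- Efficient local strategies: progressive and not risky. -/
def Eff (δ : Q → A → B → D) (dist : D → FDist Q) (m : Q → ℝ) (q : Q)
    (Gd Bd : Set Q) : Set (FDist A) :=
  Prog δ dist m q Gd \ Risk δ dist m q Bd

/-- The increasing sequence of sets of secure states w.r.t. `Bd`. -/
def SecN (δ : Q → A → B → D) (dist : D → FDist Q) (m : Q → ℝ) (T : Q) (Bd : Set Q) :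
    ℕ → Set Q
  | 0 => {T}
  | n + 1 => SecN δ dist m T Bd n ∪
      { q | q ∉ Bd ∧ (Eff δ dist m q (SecN δ dist m T Bd n) Bd).Nonempty }

/-- The set of secure states w.r.t. `Bd`. -/
def Sec (δ : Q → A → B → D) (dist : D → FDist Q) (m : Q → ℝ) (T : Q) (Bd : Set Q) :
    Set Q :=
  (⋃ n : ℕ, SecN δ dist m T Bd n) ∪ { q | m q = 0 }

/-- The sequence of sets of bad states. -/
def BadN (δ : Q → A → B → D) (dist : D → FDist Q) (m : Q → ℝ) (T : Q) : ℕ → Set Q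
  | 0 => ∅
  | n + 1 => (Sec δ dist m T (BadN δ dist m T n))ᶜ

/-- The set of bad states. -/
def Bad (δ : Q → A → B → D) (dist : D → FDist Q) (m : Q → ℝ) (T : Q) : Set Q :=
  BadN δ dist m T (Fintype.card Q)

/-- `α[y]` : the total valuation extending the partial valuation `α : O∖E → [0,1]`
with the value `y` on `E`. -/
def extendVal {O : Type} (E : Set O) (α : O → ℝ) (y : ℝ) : O → ℝ :=
  fun o => if o ∈ E then y else α o

/-- The map `f_α : y ↦ val_{⟨F, α[y]⟩}`. -/
def fval {O : Type} (ρ : A → B → O) (E : Set O) (α : O → ℝ) (y : ℝ) : ℝ :=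
  valGF (fun a b => extendVal E α y (ρ a b))

/-- `v` is the least fixed point of `f_α` on `[0,1]`. -/
def IsLfpVal {O : Type} (ρ : A → B → O) (E : Set O) (α : O → ℝ) (v : ℝ) : Prop :=
  v ∈ Set.Icc (0:ℝ) 1 ∧ fval ρ E α v = v ∧
    ∀ y ∈ Set.Icc (0:ℝ) 1, fval ρ E α y = y → v ≤ y

/-- The game form `ρ` is reach-maximizable w.r.t. the partial valuation `α : O∖E → [0,1]`. -/
def RMwrt {O : Type} (ρ : A → B → O) (E : Set O) (α : O → ℝ) : Prop :=
  ∀ v : ℝ, IsLfpVal ρ E α v →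
    v = 0 ∨
      ∃ σA ∈ OptA (fun a b => extendVal E α v (ρ a b)),
        ∀ b ∈ optActs (fun a b => extendVal E α v (ρ a b)) σA,
          ∃ a ∈ supp σA, ρ a b ∉ E

/-- A reach-maximizable game form: RM w.r.t. every partial valuation of its outcomes. -/
def RMform {O : Type} (ρ : A → B → O) : Prop :=
  ∀ (E : Set O) (α : O → ℝ), (∀ o ∉ E, α o ∈ Set.Icc (0:ℝ) 1) → RMwrt ρ E α

/-- A determined game form. -/
def Determined {O : Type} (ρ : A → B → O) : Prop :=
  ∀ E : Set O, (∃ a, ∀ b, ρ a b ∈ E) ∨ (∃ b, ∀ a, ρ a b ∉ E)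

/-- Transition function of the three-state reachability game `C_{(F,α)}`:
state `0` is `q₀`, state `1` is the target `⊤`, state `2` is the bin `⊥`. -/
def triδ {O : Type} (ρ : A → B → O) (E : Set O) :
    Fin 3 → A → B → (Fin 3 ⊕ {o : O // o ∉ E}) :=
  fun s a b =>
    if s = 0 then
      if h : ρ a b ∈ E then Sum.inl 0 else Sum.inr ⟨ρ a b, h⟩
    else Sum.inl s

/-- Nature distributions of the three-state reachability game `C_{(F,α)}`. -/
def triDist {O : Type} (E : Set O) (α : O → ℝ)
    (hα : ∀ o ∉ E, α o ∈ Set.Icc (0:ℝ) 1) :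
    (Fin 3 ⊕ {o : O // o ∉ E}) → FDist (Fin 3) := fun d =>
  match d with
  | Sum.inl t => dirac t
  | Sum.inr x =>
      ⟨![0, α x.1, 1 - α x.1], by
        obtain ⟨h0, h1⟩ := hα x.1 x.2
        constructor
        · intro s
          fin_cases s <;> simp <;> linarith
        · simp [Fin.sum_univ_three]⟩

/-- An abstract (finite) game form with actions `A` and `B`. -/
structure GameForm (A B : Type) where
  O : Type
  fin : Fintype O
  ρ : A → B → O

/-- All local interactions of the arena `δ` belong to the set `𝒢` of game forms
(up to a renaming of the outcomes into Nature states). -/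
def UsesForms {Q D : Type} (𝒢 : Set (GameForm A B)) (δ : Q → A → B → D) : Prop :=
  ∀ q, ∃ F ∈ 𝒢, ∃ g : F.O → D, δ q = fun a b => g (F.ρ a b)

/-- The sequence of iterates of Δ starting from the valuation `1_{⊤}`. -/
def vseq (δ : Q → A → B → D) (dist : D → FDist Q) (T : Q) : ℕ → Q → ℝ
  | 0 => fun q => if q = T then 1 else 0
  | n + 1 => Δop δ dist T (vseq δ dist T n)

/-- Relevant paths w.r.t. the strategy `sA` from the state `q₀`: the pair `(h, q)`
encodes the path `h · q` (history `h`, current state `q`). -/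
inductive Relevant [DecidableEq B] (δ : Q → A → B → D) (dist : D → FDist Q)
    (m : Q → ℝ) (sA : Strat Q A) (q₀ : Q) : List Q → Q → Prop
  | base : Relevant δ dist m sA q₀ [] q₀
  | step {h : List Q} {q q' : Q} :
      Relevant δ dist m sA q₀ h q →
      (∃ b ∈ optActs (locPay δ dist m q) (sA h q),
        0 < CRG.step δ dist (sA h q) (dirac b) q q') →
      Relevant δ dist m sA q₀ (h ++ [q]) q'

end CRG

/-! Δ is monotone and 1-Lipschitz for the sup norm, because the value of a finite game is
monotone in the payoff and commutes with adding a constant to it. Since `v₀ ≤ Δ v₀` and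
`v₀ ≤ m`, the iterates increase and stay below `m`; they converge to their supremum `L`, which
is a fixed point of Δ by continuity and lies in `[0,1]^Q`, so `m ≤ L ≤ m`. -/

theorem Monotone.exists_isFixedPt_tendsto_iterate {α : Type*} [ConditionallyCompleteLattice α]
    [TopologicalSpace α] [SupConvergenceClass α] [T2Space α] {f : α → α}
    (hf : Monotone f) (hc : Continuous f) {x m : α} (hx : x ≤ f x) (hxm : x ≤ m)
    (hm : Function.IsFixedPt f m) :
    ∃ L, Function.IsFixedPt f L ∧ x ≤ L ∧ L ≤ m ∧
      Filter.Tendsto (fun n => f^[n] x) Filter.atTop (nhds L) := by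
  have hle : ∀ n, f^[n] x ≤ m := fun n => (hf.iterate n hxm).trans_eq (hm.iterate n)
  have hbdd : BddAbove (Set.range fun n => f^[n] x) := ⟨m, by rintro _ ⟨n, rfl⟩; exact hle n⟩
  have hlim := tendsto_atTop_ciSup (hf.monotone_iterate_of_le_map hx) hbdd
  exact ⟨_, isFixedPt_of_tendsto_iterate hlim hc.continuousAt, le_ciSup hbdd 0, ciSup_le hle,
    hlim⟩

namespace CRG

variable {A B Q D : Type}

instance {X : Type} [Fintype X] [Nonempty X] : Nonempty (FDist X) :=
  ⟨dirac (Classical.arbitrary X)⟩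

section NormalForm

variable [Fintype A] [Fintype B] {u u' : A → B → ℝ}

lemma out_mono (h : u ≤ u') (σA : FDist A) (σB : FDist B) : out u σA σB ≤ out u' σA σB :=
  Finset.sum_le_sum fun a _ => Finset.sum_le_sum fun b _ =>
    mul_le_mul_of_nonneg_left (h a b) (mul_nonneg (σA.2.1 a) (σB.2.1 b))

lemma out_add_const (u : A → B → ℝ) (c : ℝ) (σA : FDist A) (σB : FDist B) :
    out (fun a b => u a b + c) σA σB = out u σA σB + c := by
  have hmass : ∑ a, ∑ b, σA.1 a * σB.1 b = 1 := by
    simp only [← Finset.mul_sum, σB.2.2, mul_one, σA.2.2]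
  simp only [out, mul_add, Finset.sum_add_distrib, ← Finset.sum_mul, hmass, one_mul]

lemma out_const (c : ℝ) (σA : FDist A) (σB : FDist B) : out (fun _ _ => c) σA σB = c := by
  simpa [out] using out_add_const (0 : A → B → ℝ) c σA σB

lemma bddBelow_range_out (u : A → B → ℝ) (σA : FDist A) : BddBelow (Set.range (out u σA)) := by
  obtain ⟨c, hc⟩ := (Set.finite_range (Function.uncurry u)).bddBelow
  refine ⟨c, ?_⟩
  rintro _ ⟨σB, rfl⟩
  calc c = out (fun _ _ => c) σA σB := (out_const c σA σB).symm
    _ ≤ out u σA σB := out_mono (fun a b => hc ⟨(a, b), rfl⟩) σA σB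

lemma valStratGF_mono (h : u ≤ u') (σA : FDist A) : valStratGF u σA ≤ valStratGF u' σA :=
  ciInf_mono (bddBelow_range_out u σA) fun σB => out_mono h σA σB

variable [Nonempty B]

lemma valStratGF_add_const (u : A → B → ℝ) (c : ℝ) (σA : FDist A) :
    valStratGF (fun a b => u a b + c) σA = valStratGF u σA + c := by
  simp only [valStratGF, out_add_const, ciInf_add (bddBelow_range_out u σA)]

lemma bddAbove_range_valStratGF (u : A → B → ℝ) : BddAbove (Set.range (valStratGF u)) := by
  obtain ⟨c, hc⟩ := (Set.finite_range (Function.uncurry u)).bddAbove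
  refine ⟨c, ?_⟩
  rintro _ ⟨σA, rfl⟩
  calc valStratGF u σA ≤ out u σA (Classical.arbitrary _) :=
        ciInf_le (bddBelow_range_out u σA) _
    _ ≤ out (fun _ _ => c) σA (Classical.arbitrary _) :=
        out_mono (fun a b => hc ⟨(a, b), rfl⟩) σA _
    _ = c := out_const c σA _

lemma valGF_mono (h : u ≤ u') : valGF u ≤ valGF u' :=
  ciSup_mono (bddAbove_range_valStratGF u') fun σA => valStratGF_mono h σA

variable [Nonempty A]

lemma valGF_add_const (u : A → B → ℝ) (c : ℝ) :
    valGF (fun a b => u a b + c) = valGF u + c := by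
  simp only [valGF, valStratGF_add_const, ciSup_add (bddAbove_range_valStratGF u)]

lemma valGF_const (c : ℝ) : valGF (fun (_ : A) (_ : B) => c) = c := by
  simp only [valGF, valStratGF, out_const, ciInf_const, ciSup_const]

end NormalForm

section Operator

variable [Fintype Q] {v w : Q → ℝ}

lemma lift_mono (dist : D → FDist Q) (h : v ≤ w) (d : D) : lift dist v d ≤ lift dist w d :=
  Finset.sum_le_sum fun q _ => mul_le_mul_of_nonneg_left (h q) ((dist d).2.1 q)

lemma lift_add_const (dist : D → FDist Q) (v : Q → ℝ) (c : ℝ) (d : D) :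
    lift dist (fun q => v q + c) d = lift dist v d + c := by
  simp only [lift, mul_add, Finset.sum_add_distrib, ← Finset.sum_mul, (dist d).2.2, one_mul]

lemma lift_const (dist : D → FDist Q) (c : ℝ) (d : D) : lift dist (fun _ => c) d = c := by
  simpa [lift] using lift_add_const dist 0 c d

variable [Fintype A] [Fintype B] (δ : Q → A → B → D) (dist : D → FDist Q) (T : Q)

lemma vseq_eq_iterate (n : ℕ) : vseq δ dist T n = (Δop δ dist T)^[n] (vseq δ dist T 0) := by
  induction n with
  | zero => rfl
  | succ n ih => rw [Function.iterate_succ_apply', ← ih]; rfl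

variable [Nonempty B]

lemma Δop_mono : Monotone (Δop δ dist T) := by
  intro v w h q
  unfold Δop
  split_ifs
  · exact le_rfl
  · exact valGF_mono fun a b => lift_mono dist h _

variable [Nonempty A]

lemma Δop_le_add_const {c : ℝ} (hc : 0 ≤ c) (h : ∀ q, v q ≤ w q + c) (q : Q) :
    Δop δ dist T v q ≤ Δop δ dist T w q + c := by
  unfold Δop
  split_ifs
  · linarith
  · calc valGF (fun a b => lift dist v (δ q a b))
          ≤ valGF (fun a b => lift dist w (δ q a b) + c) :=
            valGF_mono fun a b => (lift_mono dist h _).trans_eq (lift_add_const dist w c _)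
      _ = _ := valGF_add_const _ c

-- `dist` is the Nature distribution here, so the metric is written `Dist.dist`.
lemma lipschitzWith_Δop : LipschitzWith 1 (Δop δ dist T) := by
  have key : ∀ v w : Q → ℝ, ∀ q, Δop δ dist T v q ≤ Δop δ dist T w q + Dist.dist v w := by
    refine fun v w => Δop_le_add_const δ dist T dist_nonneg fun q => ?_
    have := dist_le_pi_dist v w q
    rw [Real.dist_eq, abs_sub_le_iff] at this
    linarith [this.1]
  refine LipschitzWith.of_dist_le_mul fun v w => ?_
  rw [NNReal.coe_one, one_mul, dist_pi_le_iff dist_nonneg]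
  intro q
  rw [Real.dist_eq, abs_sub_le_iff]
  exact ⟨by linarith [key v w q], by linarith [key w v q, dist_comm v w]⟩

lemma vseq_zero_le_Δop : vseq δ dist T 0 ≤ Δop δ dist T (vseq δ dist T 0) := by
  have h0 : (fun _ => 0) ≤ vseq δ dist T 0 := fun q => by
    simp only [vseq]
    split_ifs <;> norm_num
  intro q
  by_cases h : q = T
  · simp [vseq, Δop, h]
  · calc vseq δ dist T 0 q = 0 := by simp [vseq, h]
      _ = Δop δ dist T (fun _ => 0) q := by simp [Δop, h, lift_const, valGF_const]
      _ ≤ _ := Δop_mono δ dist T h0 q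

end Operator

end CRG

theorem stmt17_general
    {A B Q D : Type} [Fintype A] [Fintype B] [Fintype Q] [Fintype D]
    [Nonempty A] [Nonempty B]
    (δ : Q → A → B → D) (dist : D → FDist Q) (T : Q)
    (m : Q → ℝ) (hm : CRG.IsLfpDelta δ dist T m) (hmT : m T = 1) :
    Filter.Tendsto (CRG.vseq δ dist T) Filter.atTop (nhds m) := by
  obtain ⟨hm01, hmfix, hmleast⟩ := hm
  have hv₀ : ∀ q, 0 ≤ CRG.vseq δ dist T 0 q ∧ CRG.vseq δ dist T 0 q ≤ m q := fun q => by
    simp only [CRG.vseq]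
    split_ifs with h
    · exact ⟨zero_le_one, (h ▸ hmT).ge⟩
    · exact ⟨le_rfl, (hm01 q).1⟩
  obtain ⟨L, hLfix, hv₀L, hLm, hlim⟩ := (CRG.Δop_mono δ dist T).exists_isFixedPt_tendsto_iterate
    (CRG.lipschitzWith_Δop δ dist T).continuous
    (CRG.vseq_zero_le_Δop δ dist T) (fun q => (hv₀ q).2) hmfix
  have hLeq : L = m := le_antisymm hLm <| hmleast L
    (fun q => ⟨(hv₀ q).1.trans (hv₀L q), (hLm q).trans (hm01 q).2⟩) hLfix
  rw [← hLeq, funext (CRG.vseq_eq_iterate δ dist T)]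
  exact hlim

/-- the iterates of Δ starting from the indicator of the target converge
to `m`, the least fixed point of Δ on `V`. -/
theorem stmt17
    {A B Q D : Type} [Fintype A] [Fintype B] [Fintype Q] [Fintype D]
    [Nonempty A] [Nonempty B] [Nonempty Q] [Nonempty D] [DecidableEq Q]
    (δ : Q → A → B → D) (dist : D → FDist Q) (T : Q)
    (habs : CRG.Absorbing δ dist T)
    (m : Q → ℝ) (hm : CRG.IsLfpDelta δ dist T m) (hmT : m T = 1) :
    Filter.Tendsto (CRG.vseq δ dist T) Filter.atTop (nhds m) :=
  stmt17_general δ dist T m hm hmT
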